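/- arXiv:1105.0202 — 2 statements merged into one kernel-verified Lean document; each statement's English description precedes it below -/
import Mathlib

section
/- For fixed L > 0, there exist constants M > 0 and ε₀ > 0 such that: for all real l₀ ∈ [0, L], t with |t| ≤ L, and l ∈ (0, ε₀], if τ' is a real number satisfying cosh²(τ'/2) = A(l)/B(l) with A, B as in Okai's one-holed torus twist formula, then |τ'| ≤ M·l. -/
/-!
The difference of Okai's numerator and denominator factors as
`A - B = sinh²(l/2) · sinh²(t/2) · (2 + cosh(l₀/2) + 2 sinh²(l/2))`, and `B ≥ 1`.
Hence `sinh²(τ'/2) = (A - B)/B ≤ K · sinh²(l/2)` with `K` uniform for bounded `t, l₀, l`,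
and `|x| ≤ |sinh x|`, `sinh y ≤ y cosh y` turn this into `|τ'| ≤ M l`.
-/

noncomputable def Aok (t l₀ l : ℝ) : ℝ :=
  Real.cosh (l/2) ^ 2 *
    (Real.cosh (t/2) ^ 2 * (Real.cosh l + Real.cosh (l₀/2)) - 2 * Real.sinh (l/2) ^ 2)

noncomputable def Bok (t l₀ l : ℝ) : ℝ :=
  Real.cosh (t/2) ^ 2 * (Real.cosh (l/2) ^ 2 + Real.cosh (l₀/2)) +
    Real.sinh (l/2) ^ 2 * Real.cosh (l₀/2)

open Real

namespace Real

lemma sinh_le_mul_cosh {x : ℝ} (hx : 0 ≤ x) : sinh x ≤ x * cosh x := by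
  have hderiv : ∀ y ∈ interior (Set.Icc 0 x), deriv sinh y ≤ cosh x := by
    intro y hy
    rw [interior_Icc] at hy
    rw [deriv_sinh, cosh_le_cosh, abs_of_pos hy.1, abs_of_nonneg hx]
    exact hy.2.le
  have := (convex_Icc 0 x).image_sub_le_mul_sub_of_deriv_le continuous_sinh.continuousOn
    differentiable_sinh.differentiableOn hderiv 0 ⟨le_rfl, hx⟩ x ⟨hx, le_rfl⟩ hx
  linarith [sinh_zero]

lemma sinh_sq_le_sinh_sq {x y : ℝ} (h : |x| ≤ |y|) : sinh x ^ 2 ≤ sinh y ^ 2 := by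
  have := cosh_le_cosh.2 h
  rw [sinh_sq, sinh_sq]
  nlinarith [cosh_pos x]

lemma abs_le_sqrt_mul_mul_cosh_of_sinh_sq_le {x y K : ℝ} (hK : 0 ≤ K) (hy : 0 ≤ y)
    (h : sinh x ^ 2 ≤ K * sinh y ^ 2) : |x| ≤ √K * (y * cosh y) := by
  have hx : |x| ≤ |sinh x| := by
    rw [abs_sinh]
    exact self_le_sinh_iff.2 (abs_nonneg x)
  have hsinh : |sinh x| ≤ √K * sinh y := by
    refine abs_le_of_sq_le_sq ?_ (by positivity [sinh_nonneg_iff.2 hy])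
    rwa [mul_pow, sq_sqrt hK]
  calc |x| ≤ √K * sinh y := hx.trans hsinh
    _ ≤ √K * (y * cosh y) := by gcongr; exact sinh_le_mul_cosh hy

end Real

lemma Aok_sub_Bok (t l₀ l : ℝ) :
    Aok t l₀ l - Bok t l₀ l =
      sinh (l/2) ^ 2 * (sinh (t/2) ^ 2 * (2 + cosh (l₀/2) + 2 * sinh (l/2) ^ 2)) := by
  have hcosh : cosh l = 2 * cosh (l/2) ^ 2 - 1 := by
    have h := cosh_two_mul (l/2)
    rw [show 2 * (l/2) = l by ring, cosh_sq] at h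
    rw [h, cosh_sq]
    ring
  rw [Aok, Bok, hcosh, cosh_sq (l/2), cosh_sq (t/2)]
  ring

lemma one_le_Bok (t l₀ l : ℝ) : 1 ≤ Bok t l₀ l := by
  have ht := one_le_cosh (t/2)
  have hl := one_le_cosh (l/2)
  have hl₀ := one_le_cosh (l₀/2)
  unfold Bok
  nlinarith [sq_nonneg (sinh (l/2))]

lemma sinh_sq_half_le_Aok_sub_Bok {t l₀ l τ : ℝ}
    (h : cosh (τ/2) ^ 2 = Aok t l₀ l / Bok t l₀ l) :
    sinh (τ/2) ^ 2 ≤ Aok t l₀ l - Bok t l₀ l := by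
  have hB := one_le_Bok t l₀ l
  have hAB : 0 ≤ Aok t l₀ l - Bok t l₀ l := by
    rw [Aok_sub_Bok]
    positivity
  calc sinh (τ/2) ^ 2 = (Aok t l₀ l - Bok t l₀ l) / Bok t l₀ l := by
        rw [sinh_sq, h, sub_div, div_self (by positivity)]
    _ ≤ Aok t l₀ l - Bok t l₀ l := div_le_self hAB hB

lemma Aok_sub_Bok_le {L t l₀ l : ℝ} (ht : |t| ≤ L) (hl₀ : l₀ ∈ Set.Icc 0 L)
    (hl : |l| ≤ 2) :
    Aok t l₀ l - Bok t l₀ l ≤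
      sinh (L/2) ^ 2 * (2 + cosh (L/2) + 2 * sinh 1 ^ 2) * sinh (l/2) ^ 2 := by
  rw [Aok_sub_Bok, mul_comm]
  obtain ⟨hl₀, hl₀L⟩ := hl₀
  have hL : 0 ≤ L := (abs_nonneg t).trans ht
  gcongr ?_ * (2 + ?_ + 2 * ?_) * _
  · exact sinh_sq_le_sinh_sq (by rw [abs_div, abs_div, abs_two, abs_of_nonneg hL]; linarith)
  · exact cosh_le_cosh.2
      (by rw [abs_of_nonneg (by linarith), abs_of_nonneg (by linarith)]; linarith)
  · exact sinh_sq_le_sinh_sq (by rw [abs_div, abs_one, abs_two]; linarith)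

theorem stmt7 (L : ℝ) (hL : 0 < L) :
    ∃ M > (0:ℝ), ∃ ε₀ > (0:ℝ),
      ∀ l₀ t l τ' : ℝ, l₀ ∈ Set.Icc 0 L → |t| ≤ L → l ∈ Set.Ioc 0 ε₀ →
        Real.cosh (τ'/2) ^ 2 = Aok t l₀ l / Bok t l₀ l →
        |τ'| ≤ M * l := by
  set K := sinh (L/2) ^ 2 * (2 + cosh (L/2) + 2 * sinh 1 ^ 2)
  have hK : 0 < K := by
    have := sinh_pos_iff.2 (half_pos hL)
    positivity
  refine ⟨√K * cosh 1, by positivity, 2, two_pos, ?_⟩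
  rintro l₀ t l τ' hl₀ ht ⟨hl, hl2⟩ hτ
  have hsinh : sinh (τ'/2) ^ 2 ≤ K * sinh (l/2) ^ 2 :=
    (sinh_sq_half_le_Aok_sub_Bok hτ).trans
      (Aok_sub_Bok_le ht hl₀ (by rw [abs_of_pos hl]; exact hl2))
  have hcosh : cosh (l/2) ≤ cosh 1 :=
    cosh_le_cosh.2 (by rw [abs_of_pos (by positivity), abs_one]; linarith)
  calc |τ'| = 2 * |τ'/2| := by rw [abs_div, abs_two]; ring
    _ ≤ 2 * (√K * (l/2 * cosh (l/2))) := by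
        gcongr; exact abs_le_sqrt_mul_mul_cosh_of_sinh_sq_le hK.le (by positivity) hsinh
    _ ≤ 2 * (√K * (l/2 * cosh 1)) := by gcongr
    _ = √K * cosh 1 * l := by ring
end

section
/- Let l' > 0 and l'_t ≥ l' satisfy cosh(l'_t/2) ≤ K·cosh(l'/2) for some K ≥ 1. Then log(l'_t/l') ≤ 2K(1 + exp(−l'))/l'. -/
/-!
Since `exp x ≤ 2 cosh x` and `2 cosh (x/2) = exp (x/2) (1 + exp (-x))`, the hypothesis gives
`exp ((l't - l')/2) ≤ K (1 + exp (-l'))`. With `x + 1 ≤ exp x` this bounds `l't - l'` linearly,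
and `log y ≤ y - 1` turns that into the bound on `log (l't/l')`.
-/

open Real

lemma Real.exp_le_two_mul_cosh (x : ℝ) : exp x ≤ 2 * cosh x := by
  linarith [cosh_add_sinh x, (sinh_lt_cosh x).le]

lemma Real.two_mul_cosh_half (x : ℝ) : 2 * cosh (x / 2) = exp (x / 2) * (1 + exp (-x)) := by
  rw [cosh_eq, mul_add, ← exp_add]
  ring_nf

lemma exp_half_sub_le_of_cosh_half_le {t l K : ℝ} (h : cosh (t / 2) ≤ K * cosh (l / 2)) :
    exp ((t - l) / 2) ≤ K * (1 + exp (-l)) := by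
  have hexp : exp (t / 2) ≤ K * (1 + exp (-l)) * exp (l / 2) :=
    calc exp (t / 2) ≤ 2 * cosh (t / 2) := exp_le_two_mul_cosh _
      _ ≤ K * (2 * cosh (l / 2)) := by linarith
      _ = K * (1 + exp (-l)) * exp (l / 2) := by rw [two_mul_cosh_half]; ring
  rwa [sub_div, exp_sub, div_le_iff₀ (exp_pos _)]

lemma Real.log_div_le_sub_div {x y : ℝ} (hx : 0 < x) (hy : 0 < y) : log (y / x) ≤ (y - x) / x :=
  calc log (y / x) ≤ y / x - 1 := log_le_sub_one_of_pos (div_pos hy hx)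
    _ = (y - x) / x := by field_simp

theorem stmt12_general (l' l't K : ℝ) (hl' : 0 < l') (hle : l' ≤ l't)
    (h : Real.cosh (l't/2) ≤ K * Real.cosh (l'/2)) :
    Real.log (l't/l') ≤ 2 * K * (1 + Real.exp (-l')) / l' := by
  have hdiff : l't - l' ≤ 2 * K * (1 + exp (-l')) := by
    linarith [add_one_le_exp ((l't - l') / 2), exp_half_sub_le_of_cosh_half_le h]
  calc log (l't / l') ≤ (l't - l') / l' := log_div_le_sub_div hl' (hl'.trans_le hle)
    _ ≤ 2 * K * (1 + exp (-l')) / l' := by gcongr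

theorem stmt12 (l' l't K : ℝ) (hl' : 0 < l') (hle : l' ≤ l't) (hK : 1 ≤ K)
    (h : Real.cosh (l't/2) ≤ K * Real.cosh (l'/2)) :
    Real.log (l't/l') ≤ 2 * K * (1 + Real.exp (-l')) / l' :=
  stmt12_general l' l't K hl' hle h
end
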